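/- arXiv:1407.4637 — 3 statements merged into one kernel-verified Lean document; each statement's English description precedes it below -/
import Mathlib

section
/- Let ρ be an admissible weight function on ℝ such that ρ(x) = ρ(⌊x⌋) for every x ∈ ℝ. Define Q : C₀^ρ(ℝ) → c₀(ℤ+D̃) by Q(f) = (a_{k+τ})_{k+τ∈ℤ+D̃}, where a_{k+τ} = ρ(k)·f(k) if τ = 0 and a_{k+τ} = ρ(k)·(f(k+τ) − ½(f(k+τ⁻) + f(k+τ⁺))) if τ ∈ D̃∖{0}. Then Q is well defined (Q(f) really lies in c₀(ℤ+D̃)), linear and continuous (indeed ‖Q(f)‖ ≤ 2‖f‖^ρ_∞ for all f), Q has dense range, and Q ∘ T₁ = B_w ∘ Q, where T₁ f(x) = f(x+1) and B_w is the weighted backward shift on c₀(ℤ+D̃) with weights w_{k+τ} = ρ(k)/ρ(k+1). In particular, the translation operator T₁ on C₀^ρ(ℝ) is quasiconjugate to B_w. -/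
open Filter

/-- An admissible weight function on ℝ. -/
def Admissible (ρ : ℝ → ℝ) : Prop :=
  Measurable ρ ∧ (∀ x, 0 < ρ x) ∧
    ∃ M : ℝ, 1 ≤ M ∧ ∃ ω : ℝ, ∀ τ : ℝ, ∀ t : ℝ, 0 < t →
      ρ τ ≤ M * Real.exp (ω * t) * ρ (τ + t)

/-- Membership in `C₀^ρ(ℝ)`. -/
def MemC0rho (ρ f : ℝ → ℝ) : Prop :=
  Continuous f ∧ Tendsto (fun x => f x * ρ x) atTop (nhds 0) ∧
    Tendsto (fun x => f x * ρ x) atBot (nhds 0)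

/-- The dyadic level sets: `D 0 = {0}` and, for `n ≥ 1`,
`D n = {(2k-1)/2ⁿ : k = 1, …, 2^{n-1}}`. -/
def Dset : ℕ → Set ℝ
  | 0 => {0}
  | (n + 1) => {τ : ℝ | ∃ k : ℕ, 1 ≤ k ∧ k ≤ 2 ^ n ∧ τ = (2 * (k : ℝ) - 1) / 2 ^ (n + 1)}

/-- The set of dyadic numbers except 1: `D̃ = ⋃ₙ Dₙ`. -/
def Dtilde : Set ℝ := ⋃ n : ℕ, Dset n

/-- The index set `ℤ + D̃ ⊆ ℝ`. -/
def SZD : Set ℝ := {x : ℝ | ∃ k : ℤ, ∃ τ ∈ Dtilde, x = (k : ℝ) + τ}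

open Classical in
/-- The level of a dyadic number: the unique `n` with `τ ∈ Dₙ` (junk value `0` otherwise). -/
noncomputable def lvl (τ : ℝ) : ℕ := if h : ∃ n : ℕ, τ ∈ Dset n then h.choose else 0

/-- Membership in `c₀(ℤ+D̃)`, modelled by functions on ℝ vanishing off `ℤ+D̃`. -/
def Memc0S (a : ℝ → ℝ) : Prop :=
  (∀ x ∉ SZD, a x = 0) ∧ ∀ ε : ℝ, 0 < ε → {x : ℝ | ε ≤ |a x|}.Finite

open Classical in
/-- The operator `Q : C₀^ρ(ℝ) → c₀(ℤ+D̃)`: for `x = k + τ ∈ ℤ + D̃`,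
`Q(f)_{k+τ} = ρ(k)·f(k)` if `τ = 0`, and
`Q(f)_{k+τ} = ρ(k)·(f(k+τ) - ½(f(k+τ⁻) + f(k+τ⁺)))` if `τ ≠ 0`,
where `τ^± = τ ± 2⁻ⁿ` for `τ ∈ Dₙ`. -/
noncomputable def Qop (ρ f : ℝ → ℝ) : ℝ → ℝ := fun x =>
  if x ∈ SZD then
    if Int.fract x = 0 then ρ ((⌊x⌋ : ℤ) : ℝ) * f ((⌊x⌋ : ℤ) : ℝ)
    else ρ ((⌊x⌋ : ℤ) : ℝ) *
      (f x - (f (x - (2 : ℝ) ^ (-(lvl (Int.fract x) : ℤ))) +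
              f (x + (2 : ℝ) ^ (-(lvl (Int.fract x) : ℤ)))) / 2)
  else 0

open Classical in
/-- The weighted backward shift `B_w` on `c₀(ℤ+D̃)` with weights
`w_{k+τ} = ρ(k)/ρ(k+1)`: `(B_w a)_{k+τ} = w_{k+τ} a_{k+τ+1}`. -/
noncomputable def BwOpS (ρ : ℝ → ℝ) (a : ℝ → ℝ) : ℝ → ℝ := fun x =>
  if x ∈ SZD then (ρ ((⌊x⌋ : ℤ) : ℝ) / ρ (((⌊x⌋ : ℤ) : ℝ) + 1)) * a (x + 1) else 0

/-!
At a point `x` of level `n + 1`, `Q f x` is `ρ ⌊x⌋` times the second difference of `f` at `x`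
with step `2⁻ⁿ⁻¹`, and this stencil stays inside the cell `[⌊x⌋, ⌊x⌋ + 1]` on which `ρ` is
constant; this gives `|Q f x| ≤ 2 ‖f‖`. The stencil shrinks as the level grows, so uniform
continuity of `f` on each cell, together with the decay of `f ρ` at `±∞`, puts `Q f` in `c₀`.
Translation by `1` preserves levels and moves cells by one, which is the intertwining relation.
For density, `Q` sends the Faber–Schauder hat of half-width `2⁻ⁿ` centred at a point `y` of
level `n` to `ρ ⌊y⌋` times the unit vector at `y`, so every finitely supported family is in the
range of `Q`.
-/

open Set Filter Topology

/-- The lattice `2⁻ⁿℤ`; `Dset (n + 1)` consists of the points of `[0, 1)` lying in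
`dyadicGrid (n + 1)` but not in `dyadicGrid n`. -/
noncomputable def dyadicGrid (n : ℕ) : AddSubgroup ℝ := AddSubgroup.zmultiples ((2 ^ n)⁻¹)

lemma mem_dyadicGrid_iff {n : ℕ} {z : ℝ} : z ∈ dyadicGrid n ↔ ∃ j : ℤ, z = j / 2 ^ n := by
  simp only [dyadicGrid, AddSubgroup.mem_zmultiples_iff, zsmul_eq_mul, div_eq_mul_inv, eq_comm]

lemma dyadicGrid_mono : Monotone dyadicGrid := by
  intro n m hnm
  rw [dyadicGrid, AddSubgroup.zmultiples_le, mem_dyadicGrid_iff]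
  refine ⟨2 ^ (m - n), ?_⟩
  rw [eq_div_iff (by positivity), ← pow_sub_mul_pow 2 hnm]
  push_cast
  field_simp

lemma intCast_mem_dyadicGrid (k : ℤ) (n : ℕ) : (k : ℝ) ∈ dyadicGrid n :=
  mem_dyadicGrid_iff.mpr ⟨k * 2 ^ n, by push_cast; field_simp⟩

lemma inv_two_pow_le_abs_sub {n : ℕ} {z w : ℝ} (hz : z ∈ dyadicGrid n) (hw : w ∈ dyadicGrid n)
    (hne : z ≠ w) : (2 ^ n)⁻¹ ≤ |z - w| := by
  obtain ⟨j, hj⟩ := mem_dyadicGrid_iff.mp (sub_mem hz hw)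
  have hj0 : j ≠ 0 := by rintro rfl; exact hne (by simpa [sub_eq_zero] using hj)
  rw [hj, abs_div, abs_of_pos (by positivity : (0 : ℝ) < 2 ^ n), inv_eq_one_div]
  gcongr
  exact_mod_cast Int.one_le_abs hj0

lemma sub_add_inv_two_pow_mem_dyadicGrid {n : ℕ} {x : ℝ} (hx : x ∈ dyadicGrid (n + 1))
    (hx' : x ∉ dyadicGrid n) :
    x - (2 ^ (n + 1))⁻¹ ∈ dyadicGrid n ∧ x + (2 ^ (n + 1))⁻¹ ∈ dyadicGrid n := by
  obtain ⟨j, rfl⟩ := mem_dyadicGrid_iff.mp hx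
  obtain ⟨i, rfl⟩ : Odd j := by
    refine Int.not_even_iff_odd.mp fun ⟨i, hi⟩ => hx' (mem_dyadicGrid_iff.mpr ⟨i, ?_⟩)
    rw [hi, pow_succ]; push_cast; field_simp; ring
  constructor <;> refine mem_dyadicGrid_iff.mpr ⟨?_, ?_⟩
  exacts [i, by rw [pow_succ]; push_cast; field_simp; ring,
    i + 1, by rw [pow_succ]; push_cast; field_simp; ring]

lemma floor_le_sub_inv_two_pow {n : ℕ} {x : ℝ} (hx : x ∈ dyadicGrid (n + 1))
    (hx' : x ∉ dyadicGrid n) :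
    (⌊x⌋ : ℝ) ≤ x - (2 ^ (n + 1))⁻¹ ∧ x + (2 ^ (n + 1))⁻¹ ≤ ⌊x⌋ + 1 := by
  have hgrid (k : ℤ) : (k : ℝ) ∈ dyadicGrid (n + 1) := intCast_mem_dyadicGrid k _
  have hne (k : ℤ) : x ≠ k := fun h => hx' (h ▸ intCast_mem_dyadicGrid k n)
  have h₁ := inv_two_pow_le_abs_sub hx (hgrid ⌊x⌋) (hne _)
  have h₂ := inv_two_pow_le_abs_sub hx (hgrid (⌊x⌋ + 1)) (hne _)
  rw [abs_of_nonneg (sub_nonneg.mpr (Int.floor_le x))] at h₁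
  rw [abs_of_neg (by push_cast; linarith [Int.lt_floor_add_one x])] at h₂
  push_cast at h₂
  constructor <;> linarith

lemma mem_dyadicGrid_of_mem_Dset {n : ℕ} {τ : ℝ} (h : τ ∈ Dset n) : τ ∈ dyadicGrid n := by
  cases n with
  | zero => obtain rfl : τ = 0 := h; exact zero_mem _
  | succ n =>
    obtain ⟨k, -, -, rfl⟩ := h
    exact mem_dyadicGrid_iff.mpr ⟨2 * k - 1, by push_cast; ring⟩

lemma not_mem_dyadicGrid_of_mem_Dset_succ {n : ℕ} {τ : ℝ} (h : τ ∈ Dset (n + 1)) :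
    τ ∉ dyadicGrid n := by
  obtain ⟨k, -, -, rfl⟩ := h
  rintro hτ
  obtain ⟨j, hj⟩ := mem_dyadicGrid_iff.mp hτ
  have h2 : (0 : ℝ) < 2 ^ n := by positivity
  rw [pow_succ, div_eq_div_iff (by positivity) h2.ne'] at hj
  have : ((2 * k - 1 : ℤ) : ℝ) = ((2 * j : ℤ) : ℝ) := by
    push_cast
    exact mul_right_cancel₀ h2.ne' (by linear_combination hj)
  have := Int.cast_injective this
  omega

lemma lvl_eq_of_mem_Dset {n : ℕ} {τ : ℝ} (h : τ ∈ Dset n) : lvl τ = n := by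
  have hex : ∃ m, τ ∈ Dset m := ⟨n, h⟩
  rw [lvl, dif_pos hex]
  have hgrid_lt {a b : ℕ} (hab : a < b) (ha : τ ∈ Dset a) (hb : τ ∈ Dset b) : False := by
    obtain ⟨b, rfl⟩ := Nat.exists_eq_add_of_lt hab
    exact not_mem_dyadicGrid_of_mem_Dset_succ hb
      (dyadicGrid_mono (by omega) (mem_dyadicGrid_of_mem_Dset ha))
  rcases lt_trichotomy hex.choose n with hlt | heq | hgt
  exacts [(hgrid_lt hlt hex.choose_spec h).elim, heq, (hgrid_lt hgt h hex.choose_spec).elim]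

lemma mem_Dset_lvl {τ : ℝ} (h : τ ∈ Dtilde) : τ ∈ Dset (lvl τ) := by
  obtain ⟨n, hn⟩ := mem_iUnion.mp h
  rwa [lvl_eq_of_mem_Dset hn]

lemma Dset_finite (n : ℕ) : (Dset n).Finite := by
  cases n with
  | zero => exact finite_singleton 0
  | succ n =>
    refine ((finite_Icc 1 (2 ^ n)).image fun k : ℕ => (2 * (k : ℝ) - 1) / 2 ^ (n + 1)).subset ?_
    rintro τ ⟨k, hk₁, hk₂, rfl⟩
    exact ⟨k, ⟨hk₁, hk₂⟩, rfl⟩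

lemma Dtilde_subset_Ico : Dtilde ⊆ Ico 0 1 := by
  intro τ h
  obtain ⟨n, hn⟩ := mem_iUnion.mp h
  cases n with
  | zero => rw [mem_singleton_iff.mp hn]; norm_num
  | succ n =>
    obtain ⟨k, hk₁, hk₂, rfl⟩ := hn
    have hk₁ : (1 : ℝ) ≤ k := by exact_mod_cast hk₁
    have hk₂ : (k : ℝ) ≤ 2 ^ n := by exact_mod_cast hk₂
    constructor
    · exact div_nonneg (by linarith) (by positivity)
    · rw [div_lt_one (by positivity), pow_succ]; linarith

lemma mem_SZD_iff {x : ℝ} : x ∈ SZD ↔ Int.fract x ∈ Dtilde := by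
  refine ⟨?_, fun h => ⟨⌊x⌋, Int.fract x, h, (Int.floor_add_fract x).symm⟩⟩
  rintro ⟨k, τ, hτ, rfl⟩
  rwa [add_comm, Int.fract_add_intCast, Int.fract_eq_self.mpr (Dtilde_subset_Ico hτ)]

lemma add_one_mem_SZD_iff {x : ℝ} : x + 1 ∈ SZD ↔ x ∈ SZD := by
  rw [mem_SZD_iff, mem_SZD_iff, Int.fract_add_one]

lemma mem_dyadicGrid_lvl {x : ℝ} (hx : x ∈ SZD) : x ∈ dyadicGrid (lvl (Int.fract x)) := by
  have := add_mem (intCast_mem_dyadicGrid ⌊x⌋ _)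
    (mem_dyadicGrid_of_mem_Dset (mem_Dset_lvl (mem_SZD_iff.mp hx)))
  rwa [Int.floor_add_fract] at this

lemma not_mem_dyadicGrid_of_lvl_eq_succ {x : ℝ} {n : ℕ} (hx : x ∈ SZD)
    (hn : lvl (Int.fract x) = n + 1) : x ∉ dyadicGrid n := by
  have hτ := mem_Dset_lvl (mem_SZD_iff.mp hx)
  rw [hn] at hτ
  intro hxn
  refine not_mem_dyadicGrid_of_mem_Dset_succ hτ ?_
  rw [Int.fract, sub_eq_add_neg]
  exact add_mem hxn (neg_mem (intCast_mem_dyadicGrid _ _))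

noncomputable def secondDiff (f : ℝ → ℝ) (x d : ℝ) : ℝ := f x - (f (x - d) + f (x + d)) / 2

lemma abs_secondDiff_le (f : ℝ → ℝ) (x d : ℝ) :
    |secondDiff f x d| ≤ (|f x - f (x - d)| + |f x - f (x + d)|) / 2 := by
  rw [secondDiff, show f x - (f (x - d) + f (x + d)) / 2
    = ((f x - f (x - d)) + (f x - f (x + d))) / 2 by ring, abs_div, abs_two]
  gcongr
  exact abs_add_le _ _

section Qop

variable {ρ f : ℝ → ℝ} {x : ℝ}

lemma Qop_of_not_mem (hx : x ∉ SZD) : Qop ρ f x = 0 := if_neg hx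

lemma Qop_of_mem_SZD (hx : x ∈ SZD) :
    (lvl (Int.fract x) = 0 ∧ (⌊x⌋ : ℝ) = x ∧ Qop ρ f x = ρ x * f x) ∨
    ∃ n : ℕ, lvl (Int.fract x) = n + 1 ∧ x ∈ dyadicGrid (n + 1) ∧ x ∉ dyadicGrid n ∧
      Qop ρ f x = ρ ⌊x⌋ * secondDiff f x (2 ^ (n + 1))⁻¹ := by
  by_cases h0 : Int.fract x = 0
  · have hx' : (⌊x⌋ : ℝ) = x := by linarith [Int.floor_add_fract x]
    left
    refine ⟨h0 ▸ lvl_eq_of_mem_Dset rfl, hx', ?_⟩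
    simp only [Qop, if_pos hx, if_pos h0, hx']
  · obtain ⟨n, hn⟩ : ∃ n, lvl (Int.fract x) = n + 1 := by
      refine Nat.exists_eq_succ_of_ne_zero fun hl => h0 ?_
      simpa [hl, Dset] using mem_Dset_lvl (mem_SZD_iff.mp hx)
    right
    refine ⟨n, hn, hn ▸ mem_dyadicGrid_lvl hx, not_mem_dyadicGrid_of_lvl_eq_succ hx hn, ?_⟩
    simp only [Qop, if_pos hx, if_neg h0, hn, secondDiff, zpow_neg, zpow_natCast]

end Qop

noncomputable def QopLinearMap (ρ : ℝ → ℝ) : (ℝ → ℝ) →ₗ[ℝ] ℝ → ℝ where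
  toFun := Qop ρ
  map_add' f g := by ext x; simp only [Qop, Pi.add_apply]; split_ifs <;> ring
  map_smul' c f := by
    ext x
    simp only [Qop, Pi.smul_apply, smul_eq_mul, RingHom.id_apply]
    split_ifs <;> ring

@[simp]
lemma QopLinearMap_apply (ρ f : ℝ → ℝ) : QopLinearMap ρ f = Qop ρ f := rfl

lemma Qop_add_mul (ρ f g : ℝ → ℝ) (c : ℝ) :
    Qop ρ (fun y => f y + c * g y) = fun x => Qop ρ f x + c * Qop ρ g x :=
  (QopLinearMap ρ).map_add f (c • g) |>.trans (congrArg _ ((QopLinearMap ρ).map_smul c g))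

lemma Qop_comp_add_one {ρ : ℝ → ℝ} (hρ : ∀ x, ρ x ≠ 0) (f : ℝ → ℝ) :
    Qop ρ (fun y => f (y + 1)) = BwOpS ρ (Qop ρ f) := by
  ext x
  by_cases hx : x ∈ SZD
  · have hρ₁ := hρ (⌊x⌋ + 1)
    simp only [Qop, BwOpS, if_pos hx, if_pos (add_one_mem_SZD_iff.mpr hx), Int.fract_add_one,
      Int.floor_add_one, Int.cast_add, Int.cast_one, sub_add_eq_add_sub, add_right_comm _ _ (1 : ℝ)]
    split_ifs <;> field_simp
  · simp only [Qop, BwOpS, if_neg hx]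

section Bounds

variable {ρ f : ℝ → ℝ}

lemma apply_eq_apply_intCast_of_mem_Ico (hfloor : ∀ x : ℝ, ρ x = ρ ((⌊x⌋ : ℤ) : ℝ)) {k : ℤ}
    {t : ℝ} (ht : t ∈ Ico (k : ℝ) (k + 1)) : ρ t = ρ k := by
  rw [hfloor t, Int.floor_eq_iff.mpr ht]

lemma abs_Qop_le (hρ : ∀ x, 0 ≤ ρ x) (hfloor : ∀ x : ℝ, ρ x = ρ ((⌊x⌋ : ℤ) : ℝ))
    (hf : Continuous f) {x c : ℝ} (hc : ∀ t ∈ Ico (⌊x⌋ : ℝ) (⌊x⌋ + 1), |f t| * ρ t ≤ c) :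
    |Qop ρ f x| ≤ 2 * c := by
  -- `ρ` is constant on the cell, so by continuity of `f` the bound passes to its closure
  have hIcc : Icc (⌊x⌋ : ℝ) (⌊x⌋ + 1) ⊆ {t | |f t| * ρ ⌊x⌋ ≤ c} := by
    rw [← closure_Ico (by simp : (⌊x⌋ : ℝ) ≠ ⌊x⌋ + 1)]
    refine closure_minimal (fun t ht => ?_) (isClosed_le (by fun_prop) continuous_const)
    show |f t| * ρ ⌊x⌋ ≤ c
    rw [← apply_eq_apply_intCast_of_mem_Ico hfloor ht]
    exact hc t ht
  have hx₀ : x ∈ Icc (⌊x⌋ : ℝ) (⌊x⌋ + 1) := ⟨Int.floor_le x, (Int.lt_floor_add_one x).le⟩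
  have h₀ : |f x| * ρ ⌊x⌋ ≤ c := hIcc hx₀
  have hc₀ : 0 ≤ c := le_trans (mul_nonneg (abs_nonneg _) (hρ _)) h₀
  by_cases hx : x ∈ SZD
  swap
  · rw [Qop_of_not_mem hx, abs_zero]; linarith
  rcases Qop_of_mem_SZD (ρ := ρ) (f := f) hx with ⟨-, hxk, hQ⟩ | ⟨n, -, hxn, hxn', hQ⟩
  · rw [hQ, abs_mul, abs_of_nonneg (hρ x), mul_comm]
    rw [hxk] at h₀
    linarith
  · obtain ⟨hl, hr⟩ := floor_le_sub_inv_two_pow hxn hxn'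
    set d : ℝ := (2 ^ (n + 1))⁻¹
    have hd : 0 < d := by positivity
    have hleft : |f (x - d)| * ρ ⌊x⌋ ≤ c := hIcc ⟨hl, by linarith⟩
    have hright : |f (x + d)| * ρ ⌊x⌋ ≤ c := hIcc ⟨by linarith, hr⟩
    have hsd : |secondDiff f x d| ≤ ((|f x| + |f (x - d)|) + (|f x| + |f (x + d)|)) / 2 :=
      (abs_secondDiff_le f x d).trans (by gcongr <;> exact abs_sub _ _)
    rw [hQ, abs_mul, abs_of_nonneg (hρ _)]
    calc ρ ⌊x⌋ * |secondDiff f x d|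
        ≤ ρ ⌊x⌋ * (((|f x| + |f (x - d)|) + (|f x| + |f (x + d)|)) / 2) := by
          gcongr; exact hρ _
      _ = (2 * (|f x| * ρ ⌊x⌋) + |f (x - d)| * ρ ⌊x⌋ + |f (x + d)| * ρ ⌊x⌋) / 2 := by ring
      _ ≤ 2 * c := by linarith

lemma eventually_cofinite_forall_Ico_abs_le {g : ℝ → ℝ} (htop : Tendsto g atTop (𝓝 0))
    (hbot : Tendsto g atBot (𝓝 0)) {c : ℝ} (hc : 0 < c) :
    ∀ᶠ k : ℤ in cofinite, ∀ t ∈ Ico (k : ℝ) (k + 1), |g t| ≤ c := by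
  obtain ⟨A, hA⟩ := eventually_atTop.mp ((abs_zero (α := ℝ) ▸ htop.abs).eventually_le_const hc)
  obtain ⟨B, hB⟩ := eventually_atBot.mp ((abs_zero (α := ℝ) ▸ hbot.abs).eventually_le_const hc)
  rw [Int.cofinite_eq, eventually_sup, eventually_atBot, eventually_atTop]
  refine ⟨⟨⌊B⌋ - 1, fun k hk t ht => hB t ?_⟩, ⟨⌈A⌉, fun k hk t ht => hA t ?_⟩⟩
  · have : (k : ℝ) + 1 ≤ ⌊B⌋ := by exact_mod_cast (by omega : k + 1 ≤ ⌊B⌋)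
    linarith [ht.2, Int.floor_le B]
  · have : (⌈A⌉ : ℝ) ≤ k := by exact_mod_cast hk
    linarith [ht.1, Int.le_ceil A]

lemma bddAbove_range_abs_mul (hρ : ∀ x, 0 < ρ x) (hfloor : ∀ x : ℝ, ρ x = ρ ((⌊x⌋ : ℤ) : ℝ))
    (hf : MemC0rho ρ f) : BddAbove (range fun t => |f t| * ρ t) := by
  have hbad :=
    eventually_cofinite.mp (eventually_cofinite_forall_Ico_abs_le hf.2.1 hf.2.2 one_pos)
  set bad := {k : ℤ | ¬∀ t ∈ Ico (k : ℝ) (k + 1), |f t * ρ t| ≤ 1}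
  have hcell (k : ℤ) : BddAbove ((fun t => |f t| * ρ t) '' Ico (k : ℝ) (k + 1)) := by
    refine ((isCompact_Icc (a := (k : ℝ)) (b := k + 1)).bddAbove_image
      (f := fun t => |f t| * ρ k) (hf.1.abs.mul continuous_const).continuousOn).mono ?_
    rintro _ ⟨t, ht, rfl⟩
    exact ⟨t, Ico_subset_Icc_self ht, by simp only [apply_eq_apply_intCast_of_mem_Ico hfloor ht]⟩
  refine ((hbad.bddAbove_biUnion.mpr fun k _ => hcell k).union (bddAbove_Iic (a := 1))).mono ?_
  rintro _ ⟨t, rfl⟩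
  have ht : t ∈ Ico (⌊t⌋ : ℝ) (⌊t⌋ + 1) := ⟨Int.floor_le t, Int.lt_floor_add_one t⟩
  by_cases hk : ⌊t⌋ ∈ bad
  · exact Or.inl (mem_biUnion hk ⟨t, ht, rfl⟩)
  · have := not_not.mp hk t ht
    exact Or.inr (by rwa [abs_mul, abs_of_pos (hρ t)] at this)

lemma abs_Qop_le_two_mul_iSup (hρ : ∀ x, 0 < ρ x) (hfloor : ∀ x : ℝ, ρ x = ρ ((⌊x⌋ : ℤ) : ℝ))
    (hf : MemC0rho ρ f) (x : ℝ) : |Qop ρ f x| ≤ 2 * ⨆ t : ℝ, |f t| * ρ t :=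
  abs_Qop_le (fun x => (hρ x).le) hfloor hf.1 fun t _ =>
    le_ciSup (bddAbove_range_abs_mul hρ hfloor hf) t

lemma finite_setOf_floor_eq_and_le_abs_Qop (hρ : ∀ x, 0 < ρ x) (hf : Continuous f) (k : ℤ)
    {ε : ℝ} (hε : 0 < ε) : {x : ℝ | ⌊x⌋ = k ∧ ε ≤ |Qop ρ f x|}.Finite := by
  have hρk := hρ k
  obtain ⟨δ, hδ, hUC⟩ := Metric.uniformContinuousOn_iff.mp
    ((isCompact_Icc (a := (k : ℝ)) (b := k + 1)).uniformContinuousOn_of_continuous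
      hf.continuousOn) (ε / ρ k) (by positivity)
  obtain ⟨N, hN⟩ := exists_pow_lt_of_lt_one hδ (by norm_num : (1 / 2 : ℝ) < 1)
  refine ((finite_Iic N).biUnion fun n _ => (Dset_finite n).image ((k : ℝ) + ·)).subset ?_
  rintro x ⟨hxk, hxε⟩
  have hx : x ∈ SZD := by
    by_contra h
    rw [Qop_of_not_mem h, abs_zero] at hxε
    linarith
  refine mem_biUnion (x := lvl (Int.fract x)) ?_
    ⟨Int.fract x, mem_Dset_lvl (mem_SZD_iff.mp hx), by simp only [← hxk, Int.floor_add_fract]⟩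
  rcases Qop_of_mem_SZD (ρ := ρ) (f := f) hx with ⟨hl, -⟩ | ⟨n, hn, hxn, hxn', hQ⟩
  · rw [hl]; exact Nat.zero_le _
  rw [hn, mem_Iic]
  by_contra! hNn
  -- at levels beyond `N` the stencil is finer than `δ`
  obtain ⟨hl, hr⟩ := floor_le_sub_inv_two_pow hxn hxn'
  set d : ℝ := (2 ^ (n + 1))⁻¹
  have hd : 0 < d := by positivity
  have hdδ : d < δ := calc
    d = (1 / 2) ^ (n + 1) := by simp [d]
    _ ≤ (1 / 2) ^ N := pow_le_pow_of_le_one (by norm_num) (by norm_num) hNn.le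
    _ < δ := hN
  rw [hxk] at hl hr
  have hxI : x ∈ Icc (k : ℝ) (k + 1) := ⟨by linarith, by linarith⟩
  have hleft := hUC x hxI (x - d) ⟨hl, by linarith⟩ (by simpa [Real.dist_eq, abs_of_pos hd])
  have hright := hUC x hxI (x + d) ⟨by linarith, hr⟩ (by simpa [Real.dist_eq, abs_of_pos hd])
  rw [Real.dist_eq] at hleft hright
  have hQlt : |Qop ρ f x| < ε := calc
    |Qop ρ f x| = ρ k * |secondDiff f x d| := by rw [hQ, abs_mul, abs_of_pos (hρ _), hxk]
    _ ≤ ρ k * ((|f x - f (x - d)| + |f x - f (x + d)|) / 2) := by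
      gcongr; exact abs_secondDiff_le f x d
    _ < ρ k * (ε / ρ k) := mul_lt_mul_of_pos_left (by linarith) hρk
    _ = ε := by field_simp
  linarith

lemma Qop_memc0S (hρ : ∀ x, 0 < ρ x) (hfloor : ∀ x : ℝ, ρ x = ρ ((⌊x⌋ : ℤ) : ℝ))
    (hf : MemC0rho ρ f) : Memc0S (Qop ρ f) := by
  refine ⟨fun x hx => Qop_of_not_mem hx, fun ε hε => ?_⟩
  have hbad := eventually_cofinite.mp
    (eventually_cofinite_forall_Ico_abs_le hf.2.1 hf.2.2 (by positivity : 0 < ε / 3))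
  refine (hbad.biUnion fun k _ => finite_setOf_floor_eq_and_le_abs_Qop hρ hf.1 k hε).subset ?_
  intro x hx
  refine mem_biUnion (x := ⌊x⌋) (fun hsmall => ?_) ⟨rfl, hx⟩
  have := abs_Qop_le (fun x => (hρ x).le) hfloor hf.1 fun t ht => by
    rw [← abs_of_pos (hρ t), ← abs_mul]; exact hsmall t ht
  linarith [hx.out]

end Bounds

section Hat

/-- The hat function of height `1` supported on `[c - h, c + h]`, written as a second difference
of `|·|`: it is affine on every interval avoiding the nodes `c - h`, `c`, `c + h`. -/
noncomputable def hat (c h t : ℝ) : ℝ := (|t - (c - h)| - 2 * |t - c| + |t - (c + h)|) / (2 * h)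

variable {c h : ℝ}

lemma continuous_hat (c h : ℝ) : Continuous (hat c h) := by
  unfold hat; fun_prop

lemma hat_self (hh : 0 < h) : hat c h c = 1 := by
  rw [hat, sub_sub_cancel, sub_self, abs_zero, sub_add_cancel_left, abs_neg, abs_of_pos hh]
  field_simp
  ring

lemma hat_eq_zero (hh : 0 < h) {t : ℝ} (ht : h ≤ |t - c|) : hat c h t = 0 := by
  rcases le_abs'.mp ht with ht | ht
  · rw [hat, abs_of_nonpos (by linarith), abs_of_nonpos (by linarith),
      abs_of_nonpos (by linarith)]
    ring
  · rw [hat, abs_of_nonneg (by linarith), abs_of_nonneg (by linarith),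
      abs_of_nonneg (by linarith)]
    ring

lemma hasCompactSupport_hat (hh : 0 < h) : HasCompactSupport (hat c h) :=
  HasCompactSupport.intro (isCompact_Icc (a := c - h) (b := c + h)) fun t ht =>
    hat_eq_zero hh (le_abs'.mpr (by rw [mem_Icc, not_and_or, not_le, not_le] at ht; grind))

lemma secondDiff_abs_sub_eq_zero {x d : ℝ} (hd₀ : 0 ≤ d) (hd : d ≤ |c - x|) :
    secondDiff (fun t => |t - c|) x d = 0 := by
  rcases le_abs'.mp hd with hc | hc
  · rw [secondDiff, abs_of_nonneg (by linarith), abs_of_nonneg (by linarith),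
      abs_of_nonneg (by linarith)]
    ring
  · rw [secondDiff, abs_of_nonpos (by linarith), abs_of_nonpos (by linarith),
      abs_of_nonpos (by linarith)]
    ring

lemma secondDiff_hat_eq_zero {x d : ℝ} (hd₀ : 0 ≤ d) (h₁ : d ≤ |c - h - x|) (h₂ : d ≤ |c - x|)
    (h₃ : d ≤ |c + h - x|) : secondDiff (hat c h) x d = 0 := by
  have e₁ := secondDiff_abs_sub_eq_zero hd₀ h₁
  have e₂ := secondDiff_abs_sub_eq_zero hd₀ h₂
  have e₃ := secondDiff_abs_sub_eq_zero hd₀ h₃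
  simp only [secondDiff, hat] at *
  linear_combination (e₁ - 2 * e₂ + e₃) / (2 * h)

end Hat

lemma Qop_hat {ρ : ℝ → ℝ} {y : ℝ} (hy : y ∈ SZD) (x : ℝ) :
    Qop ρ (hat y (2 ^ lvl (Int.fract y))⁻¹) x = if x = y then ρ ⌊y⌋ else 0 := by
  set m := lvl (Int.fract y)
  set h : ℝ := (2 ^ m)⁻¹
  have hh : 0 < h := by positivity
  have hym : y ∈ dyadicGrid m := mem_dyadicGrid_lvl hy
  by_cases hx : x ∈ SZD
  swap
  · rw [Qop_of_not_mem hx, if_neg (by rintro rfl; exact hx hy)]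
  rcases Qop_of_mem_SZD (ρ := ρ) (f := hat y h) hx with ⟨-, hxk, hQ⟩ | ⟨n, hn, hxn, hxn', hQ⟩
  · rw [hQ]
    split_ifs with hxy
    · subst hxy
      rw [hat_self hh, hxk, mul_one]
    · have hxm : x ∈ dyadicGrid m := hxk ▸ intCast_mem_dyadicGrid _ _
      rw [hat_eq_zero hh (inv_two_pow_le_abs_sub hxm hym hxy), mul_zero]
  rw [hQ]
  set d : ℝ := (2 ^ (n + 1))⁻¹
  split_ifs with hxy
  · subst hxy
    have hhd : h = d := by simp only [h, d, m, hn]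
    rw [← hhd, secondDiff, hat_self hh, hat_eq_zero hh (by simp [abs_of_pos hh]),
      hat_eq_zero hh (by simp [abs_of_pos hh])]
    ring
  rw [mul_eq_zero]
  right
  obtain ⟨hxl, hxr⟩ := sub_add_inv_two_pow_mem_dyadicGrid hxn hxn'
  rcases le_or_gt m n with hmn | hnm
  · -- the nodes of the hat lie on level `n`, where `x` is isolated
    have hnode (z : ℝ) (hz : z ∈ dyadicGrid m) : d ≤ |z - x| :=
      inv_two_pow_le_abs_sub (dyadicGrid_mono (by omega) hz) hxn
        (by rintro rfl; exact hxn' (dyadicGrid_mono hmn hz))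
    have hhm : h ∈ dyadicGrid m := AddSubgroup.mem_zmultiples _
    exact secondDiff_hat_eq_zero (by positivity) (hnode _ (sub_mem hym hhm)) (hnode _ hym)
      (hnode _ (add_mem hym hhm))
  · -- all three points of the stencil lie on a level below that of `y`
    obtain ⟨m', hm'⟩ : ∃ m', m = m' + 1 := ⟨m - 1, by omega⟩
    have hfar (z : ℝ) (hz : z ∈ dyadicGrid m') : h ≤ |z - y| :=
      inv_two_pow_le_abs_sub (dyadicGrid_mono (by omega) hz) hym
        (by rintro rfl; exact not_mem_dyadicGrid_of_lvl_eq_succ hy hm' hz)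
    have hxm : x ∈ dyadicGrid m := dyadicGrid_mono (by omega) hxn
    rw [secondDiff, hat_eq_zero hh (inv_two_pow_le_abs_sub hxm hym hxy),
      hat_eq_zero hh (hfar _ (dyadicGrid_mono (by omega) hxl)),
      hat_eq_zero hh (hfar _ (dyadicGrid_mono (by omega) hxr))]
    ring

lemma memC0rho_of_hasCompactSupport {ρ f : ℝ → ℝ} (hf : Continuous f)
    (hs : HasCompactSupport f) : MemC0rho ρ f :=
  ⟨hf, hs.mul_right.is_zero_at_infty.mono_left atTop_le_cocompact,
    hs.mul_right.is_zero_at_infty.mono_left atBot_le_cocompact⟩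

lemma exists_memC0rho_abs_Qop_sub_le {ρ a : ℝ → ℝ} (hρ : ∀ x, ρ x ≠ 0) (ha : Memc0S a) {ε : ℝ}
    (hε : 0 < ε) : ∃ f : ℝ → ℝ, MemC0rho ρ f ∧ ∀ x : ℝ, |Qop ρ f x - a x| ≤ ε := by
  classical
  have hlarge := ha.2 ε hε
  set F := hlarge.toFinset
  have hF (y : ℝ) (hy : y ∈ F) : y ∈ SZD := by
    by_contra h
    have := hlarge.mem_toFinset.mp hy
    rw [mem_ofPred_eq, ha.1 y h, abs_zero] at this
    linarith
  let φ (y : ℝ) : ℝ → ℝ := hat y (2 ^ lvl (Int.fract y))⁻¹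
  have hQ (x : ℝ) : Qop ρ (∑ y ∈ F, (a y / ρ ⌊y⌋) • φ y) x = if x ∈ F then a x else 0 := by
    change QopLinearMap ρ _ x = _
    simp only [map_sum, map_smul, Finset.sum_apply, Pi.smul_apply, smul_eq_mul,
      QopLinearMap_apply]
    rw [← Finset.sum_ite_eq]
    refine Finset.sum_congr rfl fun y hy => ?_
    rw [Qop_hat (hF y hy), mul_ite, mul_zero, div_mul_cancel₀ _ (hρ _)]
  refine ⟨∑ y ∈ F, (a y / ρ ⌊y⌋) • φ y, memC0rho_of_hasCompactSupport ?_ ?_, fun x => ?_⟩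
  · simpa only [← Finset.sum_fn] using
      continuous_finsetSum F fun y _ => (continuous_hat _ _).const_smul (a y / ρ ⌊y⌋)
  · exact HasCompactSupport.finset_sum fun y _ =>
      (hasCompactSupport_hat (by positivity)).smul_left
  · rw [hQ]
    split_ifs with hx
    · rw [sub_self, abs_zero]; exact hε.le
    · rw [zero_sub, abs_neg]
      exact (not_le.mp fun h => hx (hlarge.mem_toFinset.mpr h)).le

/-- for `ρ` admissible with `ρ(x) = ρ(⌊x⌋)`, the operator `Q` is
well defined from `C₀^ρ(ℝ)` into `c₀(ℤ+D̃)`, linear, continuous with `‖Q(f)‖ ≤ 2‖f‖^ρ_∞`,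
has dense range, and intertwines the translation `T₁` with `B_w`; in particular `T₁` is
quasiconjugate to `B_w`. -/
theorem Qop_quasiconjugates_translation_to_shift
    (ρ : ℝ → ℝ) (hρ : Admissible ρ)
    (hfloor : ∀ x : ℝ, ρ x = ρ ((⌊x⌋ : ℤ) : ℝ)) :
    (∀ f : ℝ → ℝ, MemC0rho ρ f → Memc0S (Qop ρ f)) ∧
    (∀ f g : ℝ → ℝ, ∀ c : ℝ,
        Qop ρ (fun y => f y + c * g y) = fun x => Qop ρ f x + c * Qop ρ g x) ∧
    (∀ f : ℝ → ℝ, MemC0rho ρ f → ∀ x : ℝ, |Qop ρ f x| ≤ 2 * ⨆ t : ℝ, |f t| * ρ t) ∧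
    (∀ a : ℝ → ℝ, Memc0S a → ∀ ε : ℝ, 0 < ε →
        ∃ f : ℝ → ℝ, MemC0rho ρ f ∧ ∀ x : ℝ, |Qop ρ f x - a x| ≤ ε) ∧
    (∀ f : ℝ → ℝ, Qop ρ (fun y => f (y + 1)) = BwOpS ρ (Qop ρ f)) := by
  obtain ⟨-, hρpos, -⟩ := hρ
  have hρne (x : ℝ) : ρ x ≠ 0 := (hρpos x).ne'
  exact ⟨fun f hf => Qop_memc0S hρpos hfloor hf,
    Qop_add_mul ρ,
    fun f hf => abs_Qop_le_two_mul_iSup hρpos hfloor hf,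
    fun a ha ε hε => exists_memC0rho_abs_Qop_sub_le hρne ha hε,
    Qop_comp_add_one hρne⟩
end

section
/- Let ρ be an admissible weight function on ℝ such that lim_{x→±∞} ρ(x) = 0 (equivalently, by known characterizations, the translation semigroup is mixing on C₀^ρ(ℝ), equivalently chaotic on C₀^ρ(ℝ)). Then the translation semigroup (T_t)_{t≥0} is frequently hypercyclic on C₀^ρ(ℝ). -/
open Filter MeasureTheory

/-- The lower density of a measurable set `M ⊆ [0,∞)`:
`liminf_{N→∞} μ(M ∩ [0,N])/N`. -/
noncomputable def ldensR (M : Set ℝ) : ℝ :=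
  atTop.liminf fun N : ℝ => (volume (M ∩ Set.Icc 0 N)).toReal / N

/-- Frequent hypercyclicity of the translation semigroup `(T_t f)(x) = f(x+t)` on `C₀^ρ(ℝ)`:
there is `f` in the space such that for every `g` in the space and every `ε > 0`, the set
of times `t ≥ 0` with `‖T_t f - g‖^ρ_∞ ≤ ε` has positive lower density. -/
def FHTransC0 (ρ : ℝ → ℝ) : Prop :=
  ∃ f : ℝ → ℝ, MemC0rho ρ f ∧ ∀ g : ℝ → ℝ, MemC0rho ρ g → ∀ ε : ℝ, 0 < ε →
    0 < ldensR {t : ℝ | 0 ≤ t ∧ ∀ x : ℝ, |f (x + t) - g x| * ρ x ≤ ε}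

/-!
Truncating a dense sequence of `C(ℝ, ℝ)` at height `n` and cutting it off outside a compact
interval gives a sequence `G n`, dense in `C₀^ρ(ℝ)` with every term recurring infinitely often,
such that `|G n| ≤ n` and `G n = 0` off `(-(n+1), n+1)`.

Give the block `[4^k, 2·4^k]` the type `ν₂(k)`, so that blocks of each type recur with bounded
gaps in `k`, and fill a block of type `n` with translates of `G n` centred `2·L n` apart; `F` is
the sum of all these translates. As `ρ → 0` at `±∞`, the spacings `L n` can be taken so large
that, for `t` within `δ n` after a centre of type `n`, every other translate seen by `T_t F` sits
where `ρ` is negligible, so `‖T_t F - G n‖ ≤ 1/(n+1)`. A block `k` of type `n` supplies such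
times of total measure about `4^k δ n / L n` below `2·4^k`, hence positive lower density.
-/

open Set Topology Function

lemma exists_nat_forall_abs_le_of_tendsto {f : ℝ → ℝ} (htop : Tendsto f atTop (𝓝 0))
    (hbot : Tendsto f atBot (𝓝 0)) {ε : ℝ} (hε : 0 < ε) :
    ∃ d : ℕ, ∀ x, (d : ℝ) ≤ |x| → |f x| ≤ ε := by
  have h : Tendsto f (comap abs atTop) (𝓝 0) :=
    comap_abs_atTop (G := ℝ) ▸ tendsto_sup.2 ⟨hbot, htop⟩
  obtain ⟨a, ha⟩ :=
    eventually_atTop.1 (eventually_comap.1 (h.eventually (Metric.closedBall_mem_nhds 0 hε)))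
  refine ⟨⌈a⌉₊, fun x hx => ?_⟩
  simpa using ha |x| ((Nat.le_ceil a).trans hx) x rfl

lemma Admissible.exists_forall_le {ρ : ℝ → ℝ} (hρ : Admissible ρ)
    (htop : Tendsto ρ atTop (𝓝 0)) (hbot : Tendsto ρ atBot (𝓝 0)) : ∃ C, ∀ x, ρ x ≤ C := by
  obtain ⟨-, hpos, M, hM, ω, hω⟩ := hρ
  obtain ⟨T, hT⟩ := eventually_atTop.1 (htop.eventually (eventually_le_nhds one_pos))
  obtain ⟨B, hB⟩ := eventually_atBot.1 (hbot.eventually (eventually_le_nhds one_pos))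
  refine ⟨max 1 (M * Real.exp (|ω| * (T - B))), fun x => ?_⟩
  rcases le_or_gt x B with hxB | hBx
  · exact (hB x hxB).trans (le_max_left _ _)
  rcases le_or_gt T x with hTx | hxT
  · exact (hT x hTx).trans (le_max_left _ _)
  -- On `(B, T)` admissibility carries the bound `ρ T ≤ 1` back from `T` to `x`.
  have hexp : ω * (T - x) ≤ |ω| * (T - B) :=
    (mul_le_mul_of_nonneg_right (le_abs_self ω) (by linarith)).trans
      (mul_le_mul_of_nonneg_left (by linarith) (abs_nonneg ω))
  calc ρ x ≤ M * Real.exp (ω * (T - x)) * ρ (x + (T - x)) := hω x (T - x) (by linarith)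
    _ ≤ M * Real.exp (|ω| * (T - B)) * 1 := by
        rw [add_sub_cancel]
        gcongr
        exacts [(hpos T).le, hT T le_rfl]
    _ ≤ _ := by rw [mul_one]; exact le_max_right _ _

lemma abs_sub_mul_le_add {a b c r : ℝ} (hr : 0 ≤ r) :
    |a - c| * r ≤ |a - b| * r + |b - c| * r := by
  rw [← add_mul]
  exact mul_le_mul_of_nonneg_right (abs_sub_le a b c) hr

lemma natCast_mul_le_of_le_abs {ρ : ℝ → ℝ} {d : ℕ → ℕ}
    (hd : ∀ k x, (d k : ℝ) ≤ |x| → ρ x ≤ 1 / (2 * (k + 1) ^ 2)) {n m : ℕ} {x : ℝ}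
    (hn : (d n : ℝ) ≤ |x|) (hm : (d m : ℝ) ≤ |x|) : m * ρ x ≤ 1 / (2 * (n + 1)) := by
  obtain ⟨k, hnk, hmk, hk⟩ :
      ∃ k : ℕ, (n : ℝ) ≤ k ∧ (m : ℝ) ≤ k ∧ ρ x ≤ 1 / (2 * (k + 1) ^ 2) := by
    rcases le_total n m with h | h
    exacts [⟨m, by exact_mod_cast h, le_rfl, hd m x hm⟩,
      ⟨n, le_rfl, by exact_mod_cast h, hd n x hn⟩]
  calc (m : ℝ) * ρ x ≤ m * (1 / (2 * (k + 1) ^ 2)) := by gcongr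
    _ ≤ (k + 1) * (1 / (2 * (k + 1) ^ 2)) := by gcongr; linarith
    _ = 1 / (2 * (k + 1)) := by field_simp
    _ ≤ 1 / (2 * (n + 1)) := by gcongr

section DenseFamily

def cutoff (r x : ℝ) : ℝ := max 0 (min 1 (r + 1 - |x|))

lemma continuous_cutoff (r : ℝ) : Continuous (cutoff r) :=
  continuous_const.max (continuous_const.min (continuous_const.sub continuous_abs))

lemma cutoff_nonneg (r x : ℝ) : 0 ≤ cutoff r x := le_max_left _ _

lemma cutoff_le_one (r x : ℝ) : cutoff r x ≤ 1 := max_le zero_le_one (min_le_left _ _)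

lemma cutoff_eq_zero {r x : ℝ} (hx : r + 1 ≤ |x|) : cutoff r x = 0 :=
  max_eq_left (min_le_of_right_le (by linarith))

lemma cutoff_eq_one {r x : ℝ} (hx : |x| ≤ r) : cutoff r x = 1 := by
  rw [cutoff, min_eq_left (by linarith), max_eq_right zero_le_one]

lemma abs_mul_cutoff_sub_mul_le {a b r q x ε : ℝ} (hr : 0 ≤ r)
    (hin : |x| < q + 1 → |a - b| * r ≤ ε) (hout : q < |x| → |b| * r ≤ ε) :
    |a * cutoff q x - b| * r ≤ ε := by
  set t := cutoff q x
  have ht₀ : 0 ≤ t := cutoff_nonneg q x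
  have ht₁ : t ≤ 1 := cutoff_le_one q x
  have hin' : t * (|a - b| * r) ≤ t * ε := by
    rcases ht₀.eq_or_lt with h | h
    · rw [← h, zero_mul, zero_mul]
    · exact mul_le_mul_of_nonneg_left (hin (not_le.1 fun hx => h.ne' (cutoff_eq_zero hx))) ht₀
  have hout' : (1 - t) * (|b| * r) ≤ (1 - t) * ε := by
    rcases ht₁.eq_or_lt with h | h
    · rw [h, sub_self, zero_mul, zero_mul]
    · exact mul_le_mul_of_nonneg_left (hout (not_le.1 fun hx => h.ne (cutoff_eq_one hx)))
        (by linarith)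
  calc |a * t - b| * r = |t * (a - b) - (1 - t) * b| * r := by ring_nf
    _ ≤ (t * |a - b| + (1 - t) * |b|) * r := by
        gcongr
        refine (abs_sub _ _).trans ?_
        rw [abs_mul, abs_mul, abs_of_nonneg ht₀, abs_of_nonneg (sub_nonneg.2 ht₁)]
    _ = t * (|a - b| * r) + (1 - t) * (|b| * r) := by ring
    _ ≤ t * ε + (1 - t) * ε := add_le_add hin' hout'
    _ = ε := by ring

lemma abs_max_min_sub_le {a b n : ℝ} (hb : |b| ≤ n) :
    |max (-n) (min n a) - b| ≤ |a - b| := by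
  rw [abs_le] at hb
  calc |max (-n) (min n a) - b| = |max (-n) (min n a) - max (-n) (min n b)| := by
        rw [min_eq_right hb.2, max_eq_right hb.1]
    _ ≤ |min n a - min n b| := by
        simpa using abs_max_sub_max_le_max (-n) (min n a) (-n) (min n b)
    _ ≤ |a - b| := by simpa using abs_min_sub_min_le_max n a n b

/-- With `n.unpair.1.unpair = (q, i)`, this is `u i` truncated at height `n` and cut off outside
`[-(q+1), q+1]`. As `q ≤ n`, it vanishes off `(-(n+1), n+1)`; as `n.unpair.2` is free, each pair
`(q, i)` occurs for arbitrarily large `n`. -/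
noncomputable def bumpFamily (u : ℕ → C(ℝ, ℝ)) (n : ℕ) (x : ℝ) : ℝ :=
  max (-n : ℝ) (min n (u n.unpair.1.unpair.2 x)) * cutoff n.unpair.1.unpair.1 x

variable (u : ℕ → C(ℝ, ℝ))

lemma continuous_bumpFamily (n : ℕ) : Continuous (bumpFamily u n) := by
  have := continuous_cutoff n.unpair.1.unpair.1
  unfold bumpFamily
  fun_prop

lemma abs_bumpFamily_le (n : ℕ) (x : ℝ) : |bumpFamily u n x| ≤ n := by
  have hn : (0 : ℝ) ≤ n := n.cast_nonneg
  rw [bumpFamily, abs_mul, abs_of_nonneg (cutoff_nonneg _ _)]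
  calc _ ≤ (n : ℝ) * 1 :=
        mul_le_mul (abs_le.2 ⟨le_max_left _ _, max_le (by linarith) (min_le_left _ _)⟩)
          (cutoff_le_one _ _) (cutoff_nonneg _ _) hn
    _ = n := mul_one _

lemma bumpFamily_eq_zero {n : ℕ} {x : ℝ} (hx : n + 1 ≤ |x|) : bumpFamily u n x = 0 := by
  have : (n.unpair.1.unpair.1 : ℝ) ≤ n := by
    exact_mod_cast (Nat.unpair_left_le _).trans (Nat.unpair_left_le n)
  rw [bumpFamily, cutoff_eq_zero (by linarith), mul_zero]

lemma uniformContinuous_bumpFamily (n : ℕ) : UniformContinuous (bumpFamily u n) := by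
  refine HasCompactSupport.uniformContinuous_of_continuous ?_ (continuous_bumpFamily u n)
  refine HasCompactSupport.intro (isCompact_closedBall (0 : ℝ) (n + 1)) fun x hx => ?_
  rw [mem_closedBall_zero_iff, Real.norm_eq_abs, not_le] at hx
  exact bumpFamily_eq_zero u hx.le

variable {u}

lemma exists_forall_abs_sub_lt_of_denseRange {X ι : Type*} [TopologicalSpace X]
    {v : ι → C(X, ℝ)} (hv : DenseRange v) (g : C(X, ℝ)) {K : Set X} (hK : IsCompact K)
    {η : ℝ} (hη : 0 < η) : ∃ i, ∀ x ∈ K, |v i x - g x| < η := by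
  have hnhds : {f : C(X, ℝ) | ∀ x ∈ K, dist (g x) (f x) < η} ∈ 𝓝 g := by
    rw [nhds_eq_comap_uniformity]
    exact ⟨_, ContinuousMap.hasBasis_compactConvergenceUniformity.mem_of_mem
      (i := (K, {p : ℝ × ℝ | dist p.1 p.2 < η})) ⟨hK, Metric.dist_mem_uniformity hη⟩,
      fun f hf => hf⟩
  obtain ⟨_, hf, i, rfl⟩ := mem_closure_iff_nhds.1 (hv g) _ hnhds
  exact ⟨i, fun x hx => by simpa [Real.dist_eq, abs_sub_comm] using hf x hx⟩

lemma frequently_abs_bumpFamily_sub_mul_le (hu : DenseRange u) {ρ g : ℝ → ℝ} {C ε : ℝ}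
    (hρ : ∀ x, 0 ≤ ρ x) (hC : ∀ x, ρ x ≤ C) (hg : MemC0rho ρ g) (hε : 0 < ε) :
    ∃ᶠ n in atTop, ∀ x, |bumpFamily u n x - g x| * ρ x ≤ ε := by
  obtain ⟨q, hq⟩ := exists_nat_forall_abs_le_of_tendsto hg.2.1 hg.2.2 hε
  have hK : IsCompact (Icc (-(q + 1 : ℝ)) (q + 1)) := isCompact_Icc
  have hC0 : 0 ≤ C := (hρ 0).trans (hC 0)
  obtain ⟨i, hi⟩ := exists_forall_abs_sub_lt_of_denseRange hu ⟨g, hg.1⟩ hK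
    (η := ε / (C + 1)) (by positivity)
  obtain ⟨B, hB⟩ := hK.exists_bound_of_continuousOn hg.1.continuousOn
  refine frequently_atTop.2 fun N => ⟨Nat.pair (Nat.pair q i) (max N ⌈B⌉₊),
    (le_max_left _ _).trans (Nat.right_le_pair _ _), fun x => ?_⟩
  simp only [bumpFamily, Nat.unpair_pair]
  refine abs_mul_cutoff_sub_mul_le (hρ x) (fun hx => ?_) fun hx => ?_
  · have hxK : x ∈ Icc (-(q + 1 : ℝ)) (q + 1) := abs_le.1 hx.le
    have hgB : |g x| ≤ Nat.pair (Nat.pair q i) (max N ⌈B⌉₊) :=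
      calc |g x| ≤ B := hB x hxK
        _ ≤ ⌈B⌉₊ := Nat.le_ceil B
        _ ≤ _ := by exact_mod_cast (le_max_right _ _).trans (Nat.right_le_pair _ _)
    calc _ ≤ ε / (C + 1) * C :=
          mul_le_mul ((abs_max_min_sub_le hgB).trans (hi x hxK).le) (hC x) (hρ x)
            (by positivity)
      _ ≤ ε := by rw [div_mul_eq_mul_div, div_le_iff₀ (by positivity)]; nlinarith
  · rw [← abs_of_nonneg (hρ x), ← abs_mul]
    exact hq x hx.le

end DenseFamily

lemma exists_modulus_of_uniformContinuous {f : ℝ → ℝ} (hf : UniformContinuous f) {η : ℝ}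
    (hη : 0 < η) : ∃ δ, 0 < δ ∧ δ ≤ 1 ∧ ∀ y z, |y - z| ≤ δ → |f y - f z| ≤ η := by
  obtain ⟨δ, hδ, h⟩ := Metric.uniformContinuous_iff.1 hf η hη
  refine ⟨min 1 (δ / 2), by positivity, min_le_left _ _, fun y z hyz => (h ?_).le⟩
  rw [Real.dist_eq]
  linarith [min_le_right 1 (δ / 2)]

section BumpSum

variable {ι : Type*} {G : ℕ → ℝ → ℝ} {σ : ι → ℕ} {c : ι → ℝ}

noncomputable def bumpSum (G : ℕ → ℝ → ℝ) (σ : ι → ℕ) (c : ι → ℝ) (y : ℝ) : ℝ :=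
  ∑ᶠ i, G (σ i) (y - c i)

lemma bumpSum_eq_of_ne_zero (hG : ∀ (n : ℕ) (x : ℝ), n + 1 ≤ |x| → G n x = 0)
    (hsep : Pairwise fun i j => (σ i : ℝ) + σ j + 3 ≤ |c i - c j|) {i : ι} {y : ℝ}
    (hi : G (σ i) (y - c i) ≠ 0) : bumpSum G σ c y = G (σ i) (y - c i) := by
  refine finsum_eq_single _ i fun j hji => by_contra fun hj => ?_
  have h₁ := not_le.1 (mt (hG _ _) hi)
  have h₂ := not_le.1 (mt (hG _ _) hj)
  have h₃ := hsep hji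
  have := abs_sub_le (c j) y (c i)
  rw [abs_sub_comm] at h₂
  linarith

lemma exists_bumpSum_eq (hG : ∀ (n : ℕ) (x : ℝ), n + 1 ≤ |x| → G n x = 0)
    (hsep : Pairwise fun i j => (σ i : ℝ) + σ j + 3 ≤ |c i - c j|) {y : ℝ}
    (hy : bumpSum G σ c y ≠ 0) :
    ∃ i, G (σ i) (y - c i) ≠ 0 ∧ bumpSum G σ c y = G (σ i) (y - c i) := by
  by_contra! h
  exact hy (finsum_eq_zero_of_forall_eq_zero fun i => by_contra fun hi =>
    h i hi (bumpSum_eq_of_ne_zero hG hsep hi))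

lemma continuous_bumpSum (hGc : ∀ n, Continuous (G n))
    (hG : ∀ (n : ℕ) (x : ℝ), n + 1 ≤ |x| → G n x = 0)
    (hsep : Pairwise fun i j => (σ i : ℝ) + σ j + 3 ≤ |c i - c j|) :
    Continuous (bumpSum G σ c) := by
  refine continuous_finsum (fun i => (hGc _).comp (continuous_sub_right _)) fun y =>
    ⟨Metric.ball y (1 / 2), Metric.ball_mem_nhds y (by norm_num), Set.Subsingleton.finite ?_⟩
  rintro i ⟨z, hz, hzy⟩ j ⟨w, hw, hwy⟩
  by_contra hij
  have h₁ := not_le.1 (mt (hG _ _) hz)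
  have h₂ := not_le.1 (mt (hG _ _) hw)
  have h₃ := hsep hij
  rw [Metric.mem_ball, Real.dist_eq] at hzy hwy
  have := abs_sub_le (c i) z (c j)
  have := abs_sub_le z w (c j)
  have := abs_sub_le z y w
  rw [abs_sub_comm] at h₁ hwy
  linarith

end BumpSum

lemma ldensR_pos_of_eventually_le {T : Set ℝ} {c : ℝ} (hc : 0 < c)
    (h : ∀ᶠ N in atTop, c * N ≤ volume.real (T ∩ Icc 0 N)) : 0 < ldensR T := by
  have hbdd : IsBoundedUnder (· ≤ ·) atTop fun N : ℝ => volume.real (T ∩ Icc 0 N) / N := by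
    refine ⟨1, eventually_map.2 ?_⟩
    filter_upwards [eventually_gt_atTop 0] with N hN
    rw [div_le_one hN]
    calc volume.real (T ∩ Icc 0 N) ≤ volume.real (Icc 0 N) :=
          measureReal_mono inter_subset_right measure_Icc_lt_top.ne
      _ = N := by rw [Real.volume_real_Icc_of_le hN.le, sub_zero]
  refine hc.trans_le (le_liminf_of_le hbdd.isCoboundedUnder_ge ?_)
  filter_upwards [h, eventually_gt_atTop 0] with N hN hN0
  rwa [le_div_iff₀ hN0]

lemma natCast_mul_le_volume_real {S : Set ℝ} {a s δ : ℝ} {J : ℕ} (hδ : 0 ≤ δ) (hδs : δ ≤ s)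
    (hS : volume S ≠ ⊤) (hJ : ∀ j < J, Icc (a + j * s) (a + j * s + δ) ⊆ S) :
    J * δ ≤ volume.real S := by
  have hmono : Monotone fun j : ℕ => a + j * s := fun i j hij => by
    have : (i : ℝ) ≤ j := by exact_mod_cast hij
    nlinarith
  have hdisj : Pairwise (Disjoint on fun j : ℕ => Ico (a + j * s) (a + j * s + δ)) :=
    hmono.pairwise_disjoint_on_Ico_succ.mono fun i j h => h.mono
      (Ico_subset_Ico_right (by simp only [Order.succ_eq_add_one]; push_cast; linarith))
      (Ico_subset_Ico_right (by simp only [Order.succ_eq_add_one]; push_cast; linarith))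
  calc (J : ℝ) * δ = volume.real (⋃ j ∈ Finset.range J, Ico (a + j * s) (a + j * s + δ)) := by
        rw [measureReal_biUnion_finset (hdisj.set_pairwise _) (fun _ _ => measurableSet_Ico)
          fun _ _ => measure_Ico_lt_top.ne]
        simp [hδ]
    _ ≤ volume.real S := measureReal_mono (iUnion₂_subset fun j hj =>
        Ico_subset_Icc_self.trans (hJ j (Finset.mem_range.1 hj))) hS

lemma exists_padicValNat_two_eq (n w : ℕ) :
    ∃ k, w < k ∧ k ≤ w + 2 ^ (n + 2) ∧ padicValNat 2 k = n := by
  obtain ⟨q, r, hr, rfl⟩ : ∃ q r, r < 2 ^ (n + 1) ∧ w = 2 ^ (n + 1) * q + r :=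
    ⟨_, _, Nat.mod_lt w (by positivity), (Nat.div_add_mod w _).symm⟩
  refine ⟨2 ^ n * (2 * (q + 1) + 1), ?_, ?_, ?_⟩
  rotate_left 2
  · rw [padicValNat.mul (by positivity) (by omega), padicValNat.prime_pow,
      padicValNat.eq_zero_of_not_dvd (by omega), add_zero]
  all_goals
    have h₁ : 2 ^ (n + 1) = 2 ^ n * 2 := pow_succ 2 n
    have h₂ : 2 ^ (n + 2) = 2 ^ n * 4 := by ring
    nlinarith

/-- Slot `(k, j)` is the window `[4^k + 2jL, 4^k + 2(j+1)L]` of the block `[4^k, 2·4^k]`, where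
`L = L (ν₂ k)`; its centre is the midpoint of the window. -/
def Slot (L : ℕ → ℕ) : Type := {p : ℕ × ℕ // 2 * L (padicValNat 2 p.1) * (p.2 + 1) ≤ 4 ^ p.1}

namespace Slot

variable {L : ℕ → ℕ}

def type (p : Slot L) : ℕ := padicValNat 2 p.1.1

def center (p : Slot L) : ℕ := 4 ^ p.1.1 + (2 * p.1.2 + 1) * L p.type

lemma le_center (p : Slot L) : L p.type ≤ p.center :=
  (Nat.le_mul_of_pos_left _ (by omega)).trans (Nat.le_add_left _ _)

lemma center_add_le (p : Slot L) : p.center + L p.type ≤ 2 * 4 ^ p.1.1 := by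
  have := p.2
  unfold center type at *
  nlinarith

lemma center_add_add_le {p q : Slot L} (h : toLex p.1 < toLex q.1) :
    p.center + L p.type + L q.type ≤ q.center := by
  obtain ⟨⟨k, j⟩, hp⟩ := p
  obtain ⟨⟨k', j'⟩, hq⟩ := q
  simp only [Prod.Lex.lt_iff, ofLex_toLex] at h
  simp only [center, type] at *
  rcases h with hk | ⟨rfl, hj⟩
  · have h4 : 2 * 4 ^ k ≤ 4 ^ k' :=
      (by omega : 2 * 4 ^ k ≤ 4 ^ (k + 1)).trans (Nat.pow_le_pow_right (by norm_num) hk)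
    nlinarith
  · nlinarith

lemma add_le_abs_center_sub {p q : Slot L} (h : p ≠ q) :
    (L p.type + L q.type : ℝ) ≤ |(p.center : ℝ) - q.center| := by
  rcases lt_or_gt_of_ne (fun h' => h (Subtype.ext (toLex.injective h'))) with hpq | hqp
  · have : (p.center + L p.type + L q.type : ℝ) ≤ q.center := by
      exact_mod_cast center_add_add_le hpq
    rw [abs_sub_comm, abs_of_nonneg (by linarith)]
    linarith
  · have : (q.center + L q.type + L p.type : ℝ) ≤ p.center := by
      exact_mod_cast center_add_add_le hqp
    rw [abs_of_nonneg (by linarith)]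
    linarith

lemma pairwise_add_add_three_le (hL : ∀ k, k + 2 ≤ L k) :
    Pairwise fun p q : Slot L => (p.type : ℝ) + q.type + 3 ≤ |(p.center : ℝ) - q.center| :=
  fun p q hpq => by
    have hp : (p.type : ℝ) + 2 ≤ L p.type := by exact_mod_cast hL _
    have hq : (q.type : ℝ) + 2 ≤ L q.type := by exact_mod_cast hL _
    linarith [add_le_abs_center_sub hpq]

lemma natCast_div_mul_le_volume_real {n k : ℕ} {δ N : ℝ} {T : Set ℝ}
    (hkn : padicValNat 2 k = n) (hL : 1 ≤ L n) (hδ : 0 ≤ δ) (hδ1 : δ ≤ 1)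
    (hN : 2 * 4 ^ k ≤ N) (hT : ∀ p : Slot L, p.type = n → Icc (p.center : ℝ) (p.center + δ) ⊆ T) :
    ((4 ^ k / (2 * L n) : ℕ) : ℝ) * δ ≤ volume.real (T ∩ Icc 0 N) := by
  have hL1 : (1 : ℝ) ≤ L n := by exact_mod_cast hL
  refine natCast_mul_le_volume_real (a := 4 ^ k + L n) (s := 2 * L n) hδ (by linarith)
    (ne_top_of_le_ne_top measure_Icc_lt_top.ne (measure_mono inter_subset_right)) fun j hj => ?_
  let p : Slot L := ⟨(k, j), by
    rw [hkn, mul_comm]; exact (Nat.le_div_iff_mul_le (by omega)).1 hj⟩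
  have hc : (p.center : ℝ) = 4 ^ k + L n + j * (2 * L n) := by
    simp only [center, type, p, hkn]; push_cast; ring
  have hcN : (p.center + L n : ℝ) ≤ 2 * 4 ^ k := by
    have := p.center_add_le; simp only [type, p, hkn] at this; exact_mod_cast this
  rw [← hc]
  exact subset_inter (hT p hkn) (Icc_subset_Icc (by positivity) (by linarith))

lemma ldensR_pos {n : ℕ} {δ : ℝ} {T : Set ℝ} (hL : 1 ≤ L n) (hδ : 0 < δ) (hδ1 : δ ≤ 1)
    (hT : ∀ p : Slot L, p.type = n → Icc (p.center : ℝ) (p.center + δ) ⊆ T) :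
    0 < ldensR T := by
  set e := 2 ^ (n + 2)
  have hL1 : (1 : ℝ) ≤ L n := by exact_mod_cast hL
  refine ldensR_pos_of_eventually_le (c := δ / (4 * L n * 4 ^ (e + 1))) (by positivity) ?_
  filter_upwards [eventually_ge_atTop ((4 : ℝ) ^ (e + 2 * L n))] with N hN
  obtain ⟨K, hKN, hNK⟩ :=
    exists_nat_pow_near ((one_le_pow₀ (by norm_num)).trans hN) (by norm_num : (1 : ℝ) < 4)
  have hK : e + 2 * L n < K + 1 :=
    (pow_lt_pow_iff_right₀ (by norm_num : (1 : ℝ) < 4)).1 (hN.trans_lt hNK)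
  -- a block of type `n` with `K - e ≤ k < K`, so that `2 * 4 ^ k ≤ N < 4 ^ (k + e + 1)`
  obtain ⟨k, hk₁, hk₂, hkn⟩ := exists_padicValNat_two_eq n (K - e - 1)
  have hLk : 2 * L n ≤ 4 ^ k :=
    (Nat.lt_pow_self (by norm_num)).le.trans (Nat.pow_le_pow_right (by norm_num) (by omega))
  set J := 4 ^ k / (2 * L n)
  have hJ : (4 : ℝ) ^ k ≤ 4 * L n * J := by
    have h₁ : 4 ^ k < J * (2 * L n) + 2 * L n := Nat.lt_div_mul_add (by omega)
    have h₂ : 1 ≤ J := (Nat.one_le_div_iff (by omega)).2 hLk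
    exact_mod_cast (by nlinarith : 4 ^ k ≤ 4 * L n * J)
  have hkN : (2 : ℝ) * 4 ^ k ≤ N :=
    calc (2 : ℝ) * 4 ^ k ≤ 4 ^ (k + 1) := by
          rw [pow_succ]; nlinarith [pow_pos (by norm_num : (0 : ℝ) < 4) k]
      _ ≤ 4 ^ K := pow_le_pow_right₀ (by norm_num) (by omega)
      _ ≤ N := hKN
  calc δ / (4 * L n * 4 ^ (e + 1)) * N ≤ δ / (4 * L n * 4 ^ (e + 1)) * 4 ^ (k + (e + 1)) := by
        gcongr
        exact hNK.le.trans (pow_le_pow_right₀ (by norm_num) (by omega))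
    _ = δ * 4 ^ k / (4 * L n) := by rw [pow_add]; field_simp; ring
    _ ≤ J * δ := by rw [div_le_iff₀ (by positivity)]; nlinarith
    _ ≤ _ := natCast_div_mul_le_volume_real hkn hL hδ.le hδ1 hkN hT

end Slot

noncomputable def slotSum (G : ℕ → ℝ → ℝ) (L : ℕ → ℕ) : ℝ → ℝ :=
  bumpSum G Slot.type fun p : Slot L => (p.center : ℝ)

section SlotSum

variable {ρ : ℝ → ℝ} {G : ℕ → ℝ → ℝ} {L d : ℕ → ℕ}

lemma exists_abs_slotSum_le_of_ne_zero (hG : ∀ (n : ℕ) (x : ℝ), n + 1 ≤ |x| → G n x = 0)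
    (hGb : ∀ n x, |G n x| ≤ n) (hL : ∀ k, d k + k + 2 ≤ L k) {y : ℝ}
    (hy : slotSum G L y ≠ 0) : ∃ m : ℕ, |slotSum G L y| ≤ m ∧ (d m : ℝ) + 1 ≤ y := by
  obtain ⟨p, hp, hFp⟩ := exists_bumpSum_eq hG
    (Slot.pairwise_add_add_three_le fun k => (Nat.le_add_left _ _).trans (hL k)) hy
  refine ⟨p.type, by rw [slotSum, hFp]; exact hGb _ _, ?_⟩
  have h₁ := (abs_lt.1 (not_le.1 (mt (hG _ _) hp))).1
  have h₂ : (d p.type + p.type + 2 : ℝ) ≤ p.center := by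
    exact_mod_cast (hL _).trans p.le_center
  linarith

lemma memC0rho_slotSum (hGc : ∀ n, Continuous (G n))
    (hG : ∀ (n : ℕ) (x : ℝ), n + 1 ≤ |x| → G n x = 0) (hGb : ∀ n x, |G n x| ≤ n)
    (hd : ∀ k x, (d k : ℝ) ≤ |x| → ρ x ≤ 1 / (2 * (k + 1) ^ 2)) (hL : ∀ k, d k + k + 2 ≤ L k)
    (hρ : ∀ x, 0 ≤ ρ x) : MemC0rho ρ (slotSum G L) := by
  refine ⟨continuous_bumpSum hGc hG
    (Slot.pairwise_add_add_three_le fun k => (Nat.le_add_left _ _).trans (hL k)), ?_, ?_⟩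
  · refine NormedAddGroup.tendsto_nhds_zero.2 fun ε hε => ?_
    obtain ⟨M, hM⟩ := exists_nat_one_div_lt hε
    filter_upwards [eventually_ge_atTop (d M : ℝ)] with y hy
    rcases eq_or_ne (slotSum G L y) 0 with h | h
    · simpa [h] using hε
    obtain ⟨m, hm, hdm⟩ := exists_abs_slotSum_le_of_ne_zero hG hGb hL h
    have hy' : y ≤ |y| := le_abs_self y
    calc ‖slotSum G L y * ρ y‖ = |slotSum G L y| * ρ y := by
          rw [Real.norm_eq_abs, abs_mul, abs_of_nonneg (hρ y)]
      _ ≤ m * ρ y := mul_le_mul_of_nonneg_right hm (hρ y)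
      _ ≤ 1 / (2 * (M + 1)) := natCast_mul_le_of_le_abs hd (by linarith) (by linarith)
      _ < ε := hM.trans_le' (by gcongr; linarith)
  · refine tendsto_const_nhds.congr' ?_
    filter_upwards [eventually_le_atBot 0] with y hy
    by_contra h
    obtain ⟨m, -, hdm⟩ :=
      exists_abs_slotSum_le_of_ne_zero hG hGb hL (left_ne_zero_of_mul (Ne.symm h))
    linarith [(d m).cast_nonneg (α := ℝ)]

lemma abs_slotSum_sub_mul_le (hG : ∀ (n : ℕ) (x : ℝ), n + 1 ≤ |x| → G n x = 0)
    (hGb : ∀ n x, |G n x| ≤ n)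
    (hd : ∀ k x, (d k : ℝ) ≤ |x| → ρ x ≤ 1 / (2 * (k + 1) ^ 2)) (hL : ∀ k, d k + k + 2 ≤ L k)
    (hρ : ∀ x, 0 ≤ ρ x) (a : Slot L) {t x : ℝ} (ht : |t - a.center| ≤ 1) :
    |slotSum G L (x + t) - G a.type (x + t - a.center)| * ρ x ≤ 1 / (2 * (a.type + 1)) := by
  have hsep := Slot.pairwise_add_add_three_le fun k => (Nat.le_add_left _ _).trans (hL k)
  have hpos : (0 : ℝ) < 1 / (2 * (a.type + 1)) := by positivity
  rcases eq_or_ne (G a.type (x + t - a.center)) 0 with ha | ha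
  swap
  · rw [slotSum, bumpSum_eq_of_ne_zero hG hsep ha, sub_self, abs_zero, zero_mul]
    exact hpos.le
  rw [ha, sub_zero]
  rcases eq_or_ne (slotSum G L (x + t)) 0 with hF | hF
  · rw [hF, abs_zero, zero_mul]
    exact hpos.le
  obtain ⟨b, hb, hFb⟩ := exists_bumpSum_eq hG hsep hF
  have hba : b ≠ a := by rintro rfl; exact hb ha
  -- The bump at `b.center` is at distance `≥ L a.type + L b.type` from `a.center`, so `x` lies
  -- beyond both thresholds `d a.type` and `d b.type`.
  have h₁ := Slot.add_le_abs_center_sub hba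
  have h₂ := not_le.1 (mt (hG _ _) hb)
  have h₃ : (d a.type + a.type + 2 : ℝ) ≤ L a.type := by exact_mod_cast hL _
  have h₄ : (d b.type + b.type + 2 : ℝ) ≤ L b.type := by exact_mod_cast hL _
  have h₅ : |(b.center : ℝ) - a.center| ≤ |x + t - b.center| + |x| + |t - a.center| := by
    calc _ ≤ |(b.center : ℝ) - (x + t)| + |(x + t) - a.center| := abs_sub_le _ _ _
      _ ≤ |x + t - b.center| + (|x| + |t - a.center|) := by
          rw [abs_sub_comm]; gcongr; exact (abs_add_le _ _).trans_eq' (by ring_nf)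
      _ = _ := by ring
  calc |slotSum G L (x + t)| * ρ x ≤ b.type * ρ x :=
        mul_le_mul_of_nonneg_right (by rw [slotSum, hFb]; exact hGb _ _) (hρ x)
    _ ≤ 1 / (2 * (a.type + 1)) := natCast_mul_le_of_le_abs hd
        (by linarith [(d b.type).cast_nonneg (α := ℝ)])
        (by linarith [(d a.type).cast_nonneg (α := ℝ)])

lemma abs_slotSum_add_sub_mul_le (hG : ∀ (n : ℕ) (x : ℝ), n + 1 ≤ |x| → G n x = 0)
    (hGb : ∀ n x, |G n x| ≤ n)
    (hd : ∀ k x, (d k : ℝ) ≤ |x| → ρ x ≤ 1 / (2 * (k + 1) ^ 2)) (hL : ∀ k, d k + k + 2 ≤ L k)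
    (hρ : ∀ x, 0 ≤ ρ x) {C δ : ℝ} (hC : ∀ x, ρ x ≤ C) (hC0 : 0 < C) (hδ1 : δ ≤ 1) {n : ℕ}
    (hδ : ∀ y z, |y - z| ≤ δ → |G n y - G n z| ≤ 1 / (2 * (n + 1) * C))
    (a : Slot L) (ha : a.type = n) {t : ℝ} (ht : t ∈ Icc (a.center : ℝ) (a.center + δ))
    (x : ℝ) : |slotSum G L (x + t) - G n x| * ρ x ≤ 1 / (n + 1) := by
  have hta : |t - a.center| ≤ δ := abs_le.2 ⟨by linarith [ht.1, ht.2], by linarith [ht.2]⟩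
  have hfar := abs_slotSum_sub_mul_le hG hGb hd hL hρ a (hta.trans hδ1) (x := x)
  rw [ha] at hfar
  have hnear : |G n (x + t - a.center) - G n x| * ρ x ≤ 1 / (2 * (n + 1)) :=
    calc _ ≤ 1 / (2 * (n + 1) * C) * C :=
          mul_le_mul (hδ _ _ (by rwa [add_sub_assoc, add_sub_cancel_left])) (hC x) (hρ x)
            (by positivity)
      _ = 1 / (2 * (n + 1)) := by field_simp
  calc _ ≤ _ := abs_sub_mul_le_add (hρ x)
    _ ≤ 1 / (2 * (n + 1)) + 1 / (2 * (n + 1)) := add_le_add hfar hnear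
    _ = 1 / (n + 1) := by field_simp; ring

end SlotSum

/-- If `ρ` is an admissible weight function on ℝ with `lim_{x→±∞} ρ(x) = 0`
(equivalently, the translation semigroup is mixing, equivalently chaotic, on `C₀^ρ(ℝ)`),
then the translation semigroup is frequently hypercyclic on `C₀^ρ(ℝ)`. -/
theorem translation_semigroup_freqHypercyclic_of_chaotic
    (ρ : ℝ → ℝ) (hρ : Admissible ρ)
    (htop : Tendsto ρ atTop (nhds 0)) (hbot : Tendsto ρ atBot (nhds 0)) :
    FHTransC0 ρ := by
  obtain ⟨C, hC⟩ := hρ.exists_forall_le htop hbot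
  have hρ0 : ∀ x, 0 ≤ ρ x := fun x => (hρ.2.1 x).le
  have hC0 : 0 < C := (hρ.2.1 0).trans_le (hC 0)
  obtain ⟨u, hu⟩ := TopologicalSpace.exists_dense_seq C(ℝ, ℝ)
  have hG := fun n x => bumpFamily_eq_zero u (n := n) (x := x)
  choose d hd using fun k : ℕ =>
    exists_nat_forall_abs_le_of_tendsto htop hbot (ε := 1 / (2 * (k + 1) ^ 2)) (by positivity)
  replace hd : ∀ (k : ℕ) (x : ℝ), (d k : ℝ) ≤ |x| → ρ x ≤ 1 / (2 * (k + 1) ^ 2) :=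
    fun k x hx => (le_abs_self _).trans (hd k x hx)
  choose δ hδ0 hδ1 hδ using fun n : ℕ => exists_modulus_of_uniformContinuous
    (uniformContinuous_bumpFamily u n) (η := 1 / (2 * (n + 1) * C)) (by positivity)
  set L : ℕ → ℕ := fun k => d k + k + 2
  refine ⟨slotSum (bumpFamily u) L, memC0rho_slotSum (continuous_bumpFamily u) hG
    (abs_bumpFamily_le u) hd (fun _ => le_rfl) hρ0, fun g hg ε hε => ?_⟩
  have hsmall := tendsto_one_div_add_atTop_nhds_zero_nat.eventually
    (eventually_le_nhds (half_pos hε))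
  obtain ⟨n, hgn, hn⟩ :=
    ((frequently_abs_bumpFamily_sub_mul_le hu hρ0 hC hg (half_pos hε)).and_eventually hsmall).exists
  refine Slot.ldensR_pos (L := L) (n := n) (by simp [L]) (hδ0 n) (hδ1 n) fun p hp t ht =>
    ⟨(Nat.cast_nonneg _).trans ht.1, fun x => ?_⟩
  calc _ ≤ _ := abs_sub_mul_le_add (hρ0 x)
    _ ≤ ε / 2 + ε / 2 := add_le_add ((abs_slotSum_add_sub_mul_le hG (abs_bumpFamily_le u) hd
        (fun _ => le_rfl) hρ0 hC hC0 (hδ1 n) (hδ n) p hp ht x).trans hn) (hgn x)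
    _ = ε := add_halves ε
end

section
/- Let ρ be an admissible weight function on ℝ with lim_{x→±∞} ρ(x) = 0, and let k ∈ ℤ, τ ∈ D̃. Then in the normed space of bounded functions ℝ → ℝ with the supremum norm, the family (x ↦ φ_{k+τ}(x+n)·ρ(x))_{n∈ℕ} is summable and the family (x ↦ φ_{k+τ}(x−n)·ρ(x))_{n∈ℕ} is summable; equivalently, the series Σ_{n≥1} T₁ⁿ φ_{k+τ} and Σ_{n≥1} Sⁿ φ_{k+τ} converge unconditionally in C₀^ρ(ℝ), where T₁ f(x) = f(x+1) and S f(x) = f(x−1). -/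
open Filter

/-- The hat function `φ_c` at level `n`: `φ_c(x) = φ(2ⁿ(x - c))`, `φ(x) = max{0, 1-|x|}`. -/
noncomputable def phiF (n : ℕ) (c x : ℝ) : ℝ := max 0 (1 - |(2 : ℝ) ^ n * (x - c)|)

/-!
The hat function `φ_c` is bounded by `1` and supported in `(c - 1, c + 1)`. For `f` supported in
`(a, b)` and fixed `x`, only the indices `n < ⌈b - x⌉₊` contribute to `∑ₙ f (x + n)`, so the
pointwise sum is a finite partial sum. Since `b - a ≤ 2`, at most two terms are nonzero at any
`x`, so every tail is bounded by `2`; and the terms with `n ≥ n₀` live at `x < b - n₀`, where the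
weight is small because `ρ → 0` at `-∞`. The translates `f (x - n)` reduce to this case by the
reflection `x ↦ -x`.
-/

open Finset Function

/-- Unconditional convergence of `∑ₙ uₙ` in the weighted sup-norm `sup_x |v x| * ρ x`, as
convergence of the net of finite partial sums. -/
def WeightedUniformSummable {α : Type*} (ρ : α → ℝ) (u : ℕ → α → ℝ) : Prop :=
  ∃ g : α → ℝ, ∀ ε : ℝ, 0 < ε → ∃ F : Finset ℕ, ∀ G : Finset ℕ, F ⊆ G →
    ∀ x : α, |(∑ n ∈ G, u n x) - g x| * ρ x ≤ ε

theorem WeightedUniformSummable.comp {α β : Type*} {ρ : α → ℝ} {u : ℕ → α → ℝ}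
    (h : WeightedUniformSummable ρ u) (σ : β → α) :
    WeightedUniformSummable (ρ ∘ σ) fun n => u n ∘ σ := by
  obtain ⟨g, hg⟩ := h
  refine ⟨g ∘ σ, fun ε hε => ?_⟩
  obtain ⟨F, hF⟩ := hg ε hε
  exact ⟨F, fun G hG x => hF G hG (σ x)⟩

theorem card_filter_add_natCast_mem_Ioo_le_two (s : Finset ℕ) (x : ℝ) {a b : ℝ}
    (hab : b ≤ a + 2) : #(s.filter fun n : ℕ => x + n ∈ Set.Ioo a b) ≤ 2 := by
  set k := ⌊a - x⌋
  have hsub : (s.filter fun n : ℕ => x + n ∈ Set.Ioo a b).map Nat.castEmbedding ⊆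
      Finset.Icc (k + 1) (k + 2) := by
    simp only [Finset.subset_iff, Finset.mem_map, mem_filter, Set.mem_Ioo, Finset.mem_Icc]
    rintro _ ⟨n, ⟨-, hlo, hhi⟩, rfl⟩
    simp only [Nat.castEmbedding_apply]
    constructor
    · exact Int.add_one_le_iff.2 (Int.floor_lt.2 (by push_cast; linarith))
    · have : (n : ℤ) - 2 ≤ k := Int.le_floor.2 (by push_cast; linarith)
      omega
  simpa using card_le_card hsub

section Translates

variable {f : ℝ → ℝ} {a b : ℝ}

theorem abs_sum_comp_add_natCast_le_two (hf : ∀ y, |f y| ≤ 1)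
    (hsupp : support f ⊆ Set.Ioo a b) (hab : b ≤ a + 2) (s : Finset ℕ) (x : ℝ) :
    |∑ n ∈ s, f (x + n)| ≤ 2 := by
  set t := s.filter fun n : ℕ => x + n ∈ Set.Ioo a b
  calc |∑ n ∈ s, f (x + n)| = |∑ n ∈ t, f (x + n)| := by
        rw [sum_filter_of_ne fun n _ h => hsupp h]
    _ ≤ ∑ n ∈ t, |f (x + n)| := abs_sum_le_sum_abs _ _
    _ ≤ #t • (1 : ℝ) := sum_le_card_nsmul _ _ _ fun n _ => hf _
    _ ≤ 2 := by
        rw [nsmul_one]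
        exact_mod_cast card_filter_add_natCast_mem_Ioo_le_two s x hab

theorem weightedUniformSummable_comp_add_natCast {ρ : ℝ → ℝ}
    (hρ : Tendsto ρ atBot (nhds 0))
    (hf : ∀ y, |f y| ≤ 1) (hsupp : support f ⊆ Set.Ioo a b) (hab : b ≤ a + 2) :
    WeightedUniformSummable ρ fun n x => f (x + n) := by
  have hvanish : ∀ (x : ℝ) (n : ℕ), ⌈b - x⌉₊ ≤ n → f (x + n) = 0 := fun x n hn =>
    notMem_support.1 fun h => by
      have := (hsupp h).2
      have : b - x ≤ n := (Nat.le_ceil _).trans (by exact_mod_cast hn)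
      linarith
  refine ⟨fun x => ∑ n ∈ range ⌈b - x⌉₊, f (x + n), fun ε hε => ?_⟩
  obtain ⟨B, hB⟩ := eventually_atBot.1 (hρ.eventually (eventually_lt_nhds (half_pos hε)))
  refine ⟨range ⌈b - B⌉₊, fun G hG x => ?_⟩
  have hdiff : (∑ n ∈ G, f (x + n)) - ∑ n ∈ range ⌈b - x⌉₊, f (x + n)
      = -∑ n ∈ range ⌈b - x⌉₊ \ G, f (x + n) := by
    rw [← sum_sdiff_sub_sum_sdiff, sum_eq_zero fun n hn => hvanish x n ?_, zero_sub]
    simpa using (mem_sdiff.1 hn).2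
  rw [hdiff, abs_neg]
  rcases le_or_gt x B with hxB | hBx
  · calc |∑ n ∈ range ⌈b - x⌉₊ \ G, f (x + n)| * ρ x
        ≤ |∑ n ∈ range ⌈b - x⌉₊ \ G, f (x + n)| * (ε / 2) :=
          mul_le_mul_of_nonneg_left (hB x hxB).le (abs_nonneg _)
      _ ≤ 2 * (ε / 2) :=
          mul_le_mul_of_nonneg_right (abs_sum_comp_add_natCast_le_two hf hsupp hab _ x)
            (half_pos hε).le
      _ = ε := by ring
  · have hempty : range ⌈b - x⌉₊ \ G = ∅ :=
      sdiff_eq_empty_iff_subset.2 ((range_subset_range.2 (Nat.ceil_mono (by linarith))).trans hG)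
    simp [hempty, hε.le]

theorem weightedUniformSummable_comp_sub_natCast {ρ : ℝ → ℝ}
    (hρ : Tendsto ρ atTop (nhds 0))
    (hf : ∀ y, |f y| ≤ 1) (hsupp : support f ⊆ Set.Ioo a b) (hab : b ≤ a + 2) :
    WeightedUniformSummable ρ fun n x => f (x - n) := by
  have hsupp_neg : support (fun y => f (-y)) ⊆ Set.Ioo (-b) (-a) := fun y hy =>
    ⟨by linarith [(hsupp hy).2], by linarith [(hsupp hy).1]⟩
  have := (weightedUniformSummable_comp_add_natCast (hρ.comp tendsto_neg_atBot_atTop)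
    (fun y => hf (-y)) hsupp_neg (by linarith)).comp Neg.neg
  simpa [Function.comp_def, sub_eq_add_neg, add_comm] using this

end Translates

theorem abs_phiF_le_one (N : ℕ) (c y : ℝ) : |phiF N c y| ≤ 1 := by
  rw [abs_of_nonneg (le_max_left _ _)]
  exact max_le zero_le_one (by linarith [abs_nonneg ((2 : ℝ) ^ N * (y - c))])

theorem support_phiF_subset (N : ℕ) (c : ℝ) :
    support (phiF N c) ⊆ Set.Ioo (c - 1) (c + 1) := by
  intro y hy
  have hyc : |y - c| < 1 := by
    by_contra! h
    have h2N : (1 : ℝ) ≤ 2 ^ N := one_le_pow₀ one_le_two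
    have : 1 ≤ |(2 : ℝ) ^ N * (y - c)| := by
      rw [abs_mul, abs_of_pos (by positivity)]
      nlinarith
    exact hy (max_eq_left (by linarith))
  rw [abs_sub_lt_iff] at hyc
  exact ⟨by linarith, by linarith⟩

theorem translates_of_hat_function_summable_general
    (ρ : ℝ → ℝ)
    (htop : Tendsto ρ atTop (nhds 0)) (hbot : Tendsto ρ atBot (nhds 0))
    (k : ℤ) (N : ℕ) (τ : ℝ) :
    (∃ g : ℝ → ℝ, ∀ ε : ℝ, 0 < ε → ∃ F : Finset ℕ, ∀ G : Finset ℕ, F ⊆ G →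
        ∀ x : ℝ, |(∑ n ∈ G, phiF N ((k : ℝ) + τ) (x + (n : ℝ))) - g x| * ρ x ≤ ε) ∧
    (∃ g : ℝ → ℝ, ∀ ε : ℝ, 0 < ε → ∃ F : Finset ℕ, ∀ G : Finset ℕ, F ⊆ G →
        ∀ x : ℝ, |(∑ n ∈ G, phiF N ((k : ℝ) + τ) (x - (n : ℝ))) - g x| * ρ x ≤ ε) :=
  ⟨weightedUniformSummable_comp_add_natCast hbot (abs_phiF_le_one N _)
      (support_phiF_subset N _) (by linarith),
    weightedUniformSummable_comp_sub_natCast htop (abs_phiF_le_one N _)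
      (support_phiF_subset N _) (by linarith)⟩

/-- Let `ρ` be admissible on ℝ with `ρ(x) → 0` as `x → ±∞`, `k ∈ ℤ`,
`τ ∈ D̃` (say `τ ∈ Dₙ`). Then the series `Σ_{n≥1} T₁ⁿ φ_{k+τ}` and `Σ_{n≥1} Sⁿ φ_{k+τ}`
converge unconditionally in `C₀^ρ(ℝ)` (equivalently, the corresponding families are
summable for the weighted sup-norm): there is a sum function `g` such that for every
`ε > 0` some finite set `F ⊆ ℕ` satisfies `‖Σ_{n∈G} T₁ⁿ φ_{k+τ} - g‖^ρ_∞ ≤ ε` for all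
finite `G ⊇ F`, and similarly for `S`. -/
theorem translates_of_hat_function_summable
    (ρ : ℝ → ℝ) (hρ : Admissible ρ)
    (htop : Tendsto ρ atTop (nhds 0)) (hbot : Tendsto ρ atBot (nhds 0))
    (k : ℤ) (N : ℕ) (τ : ℝ) (hτ : τ ∈ Dset N) :
    (∃ g : ℝ → ℝ, ∀ ε : ℝ, 0 < ε → ∃ F : Finset ℕ, ∀ G : Finset ℕ, F ⊆ G →
        ∀ x : ℝ, |(∑ n ∈ G, phiF N ((k : ℝ) + τ) (x + (n : ℝ))) - g x| * ρ x ≤ ε) ∧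
    (∃ g : ℝ → ℝ, ∀ ε : ℝ, 0 < ε → ∃ F : Finset ℕ, ∀ G : Finset ℕ, F ⊆ G →
        ∀ x : ℝ, |(∑ n ∈ G, phiF N ((k : ℝ) + τ) (x - (n : ℝ))) - g x| * ρ x ≤ ε) :=
  translates_of_hat_function_summable_general ρ htop hbot k N τ
end
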